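/- arXiv:2112.00572 — 6 statements merged into one kernel-verified Lean document; each statement's English description precedes it below -/
import Mathlib

section
/- Let A be an algebra with a submultiplicative norm ‖·‖ and δ : A → A a derivation. Define recursively ‖a‖_0 = ‖a‖ and ‖a‖_{M+1} = ‖a‖_M + ‖δ(a)‖_M. Then each ‖·‖_M is a submultiplicative norm on A. -/
/-!
For a submultiplicative norm `p` put `p_δ a = p a + p (δ a)`. The Leibniz rule gives
`p_δ (a * b) ≤ p a * p b + p a * p (δ b) + p (δ a) * p b ≤ p_δ a * p_δ b`,
the dropped term `p (δ a) * p (δ b)` being nonnegative, and the remaining norm axioms pass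
to `p_δ` because `δ` is linear. As `‖·‖_{M+1} = (‖·‖_M)_δ`, induction on `M` concludes.
-/

/-- The recursively defined M-norms: `‖a‖₀ = n a`, `‖a‖_{M+1} = ‖a‖_M + ‖δ a‖_M`. -/
def MNorm {A : Type*} (n : A → ℝ) (δ : A → A) : ℕ → A → ℝ
  | 0, a => n a
  | M + 1, a => MNorm n δ M a + MNorm n δ M (δ a)

structure IsSubmultiplicativeNorm (𝕜 : Type*) {A : Type*} [NormedField 𝕜] [NonUnitalRing A]
    [Module 𝕜 A] (p : A → ℝ) : Prop where
  nonneg : ∀ a, 0 ≤ p a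
  eq_zero_iff : ∀ a, p a = 0 ↔ a = 0
  add_le : ∀ a b, p (a + b) ≤ p a + p b
  smul : ∀ (c : 𝕜) a, p (c • a) = ‖c‖ * p a
  mul_le : ∀ a b, p (a * b) ≤ p a * p b

section AddComp

variable {A : Type*} {p : A → ℝ} {δ : A → A}

theorem add_comp_nonneg (hp : ∀ a, 0 ≤ p a) (a : A) : 0 ≤ p a + p (δ a) :=
  add_nonneg (hp a) (hp (δ a))

theorem add_comp_eq_zero_iff [Zero A] (hp : ∀ a, 0 ≤ p a) (hzero : ∀ a, p a = 0 ↔ a = 0)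
    (hδ : δ 0 = 0) (a : A) : p a + p (δ a) = 0 ↔ a = 0 := by
  rw [add_eq_zero_iff_of_nonneg (hp a) (hp (δ a)), hzero, hzero]
  constructor
  · exact And.left
  · rintro rfl
    exact ⟨rfl, hδ⟩

theorem add_comp_add_le [Add A] (htri : ∀ a b, p (a + b) ≤ p a + p b)
    (hδ : ∀ a b, δ (a + b) = δ a + δ b) (a b : A) :
    p (a + b) + p (δ (a + b)) ≤ (p a + p (δ a)) + (p b + p (δ b)) := by
  rw [hδ]
  linarith [htri a b, htri (δ a) (δ b)]

theorem add_comp_smul {𝕜 : Type*} [Norm 𝕜] [SMul 𝕜 A]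
    (hhomog : ∀ (c : 𝕜) a, p (c • a) = ‖c‖ * p a) (hδ : ∀ (c : 𝕜) a, δ (c • a) = c • δ a)
    (c : 𝕜) (a : A) : p (c • a) + p (δ (c • a)) = ‖c‖ * (p a + p (δ a)) := by
  rw [hδ, hhomog, hhomog, mul_add]

theorem add_comp_mul_le [Add A] [Mul A] (hp : ∀ a, 0 ≤ p a)
    (htri : ∀ a b, p (a + b) ≤ p a + p b) (hsubmul : ∀ a b, p (a * b) ≤ p a * p b)
    (hleibniz : ∀ a b, δ (a * b) = a * δ b + δ a * b) (a b : A) :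
    p (a * b) + p (δ (a * b)) ≤ (p a + p (δ a)) * (p b + p (δ b)) := by
  have hδ : p (δ (a * b)) ≤ p a * p (δ b) + p (δ a) * p b := by
    rw [hleibniz]
    linarith [htri (a * δ b) (δ a * b), hsubmul a (δ b), hsubmul (δ a) b]
  nlinarith [hsubmul a b, mul_nonneg (hp (δ a)) (hp (δ b))]

end AddComp

theorem IsSubmultiplicativeNorm.add_comp {𝕜 A : Type*} [NormedField 𝕜] [NonUnitalRing A]
    [Module 𝕜 A] {p : A → ℝ} (hp : IsSubmultiplicativeNorm 𝕜 p) (δ : A →ₗ[𝕜] A)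
    (hleibniz : ∀ a b, δ (a * b) = a * δ b + δ a * b) :
    IsSubmultiplicativeNorm 𝕜 (fun a ↦ p a + p (δ a)) where
  nonneg := add_comp_nonneg hp.nonneg
  eq_zero_iff := add_comp_eq_zero_iff hp.nonneg hp.eq_zero_iff δ.map_zero
  add_le := add_comp_add_le hp.add_le δ.map_add
  smul := add_comp_smul hp.smul δ.map_smul
  mul_le := add_comp_mul_le hp.nonneg hp.add_le hp.mul_le hleibniz

theorem IsSubmultiplicativeNorm.mNorm {𝕜 A : Type*} [NormedField 𝕜] [NonUnitalRing A]
    [Module 𝕜 A] {p : A → ℝ} (hp : IsSubmultiplicativeNorm 𝕜 p) (δ : A →ₗ[𝕜] A)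
    (hleibniz : ∀ a b, δ (a * b) = a * δ b + δ a * b) (M : ℕ) :
    IsSubmultiplicativeNorm 𝕜 (MNorm p δ M) := by
  induction M with
  | zero => exact hp
  | succ M ih => exact ih.add_comp δ hleibniz

theorem mnorm_is_submultiplicative_norm_general {A : Type*} [NonUnitalRing A] [Module ℂ A]
    (n : A → ℝ)
    (hnonneg : ∀ a, 0 ≤ n a)
    (hzero : ∀ a, n a = 0 ↔ a = 0)
    (htri : ∀ a b, n (a + b) ≤ n a + n b)
    (hhomog : ∀ (c : ℂ) (a : A), n (c • a) = ‖c‖ * n a)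
    (hsubmul : ∀ a b, n (a * b) ≤ n a * n b)
    (δ : A →ₗ[ℂ] A)
    (hleibniz : ∀ a b, δ (a * b) = a * δ b + δ a * b) :
    ∀ M : ℕ,
      (∀ a, 0 ≤ MNorm n (⇑δ) M a) ∧
      (∀ a, MNorm n (⇑δ) M a = 0 ↔ a = 0) ∧
      (∀ a b, MNorm n (⇑δ) M (a + b) ≤ MNorm n (⇑δ) M a + MNorm n (⇑δ) M b) ∧
      (∀ (c : ℂ) (a : A), MNorm n (⇑δ) M (c • a) = ‖c‖ * MNorm n (⇑δ) M a) ∧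
      (∀ a b, MNorm n (⇑δ) M (a * b) ≤ MNorm n (⇑δ) M a * MNorm n (⇑δ) M b) := by
  intro M
  have hn : IsSubmultiplicativeNorm ℂ n := ⟨hnonneg, hzero, htri, hhomog, hsubmul⟩
  obtain ⟨hM₁, hM₂, hM₃, hM₄, hM₅⟩ := hn.mNorm δ hleibniz M
  exact ⟨hM₁, hM₂, hM₃, hM₄, hM₅⟩

/-- Let `A` be a (not necessarily unital) algebra over `ℂ` with a submultiplicative
norm `n`, and `δ : A → A` a derivation.  Then each M-norm `‖·‖_M` is again a
submultiplicative norm on `A`. -/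
theorem mnorm_is_submultiplicative_norm {A : Type*} [NonUnitalRing A] [Module ℂ A]
    [SMulCommClass ℂ A A] [IsScalarTower ℂ A A]
    (n : A → ℝ)
    (hnonneg : ∀ a, 0 ≤ n a)
    (hzero : ∀ a, n a = 0 ↔ a = 0)
    (htri : ∀ a b, n (a + b) ≤ n a + n b)
    (hhomog : ∀ (c : ℂ) (a : A), n (c • a) = ‖c‖ * n a)
    (hsubmul : ∀ a b, n (a * b) ≤ n a * n b)
    (δ : A →ₗ[ℂ] A)
    (hleibniz : ∀ a b, δ (a * b) = a * δ b + δ a * b) :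
    ∀ M : ℕ,
      (∀ a, 0 ≤ MNorm n (⇑δ) M a) ∧
      (∀ a, MNorm n (⇑δ) M a = 0 ↔ a = 0) ∧
      (∀ a b, MNorm n (⇑δ) M (a + b) ≤ MNorm n (⇑δ) M a + MNorm n (⇑δ) M b) ∧
      (∀ (c : ℂ) (a : A), MNorm n (⇑δ) M (c • a) = ‖c‖ * MNorm n (⇑δ) M a) ∧
      (∀ a b, MNorm n (⇑δ) M (a * b) ≤ MNorm n (⇑δ) M a * MNorm n (⇑δ) M b) :=
  mnorm_is_submultiplicative_norm_general n hnonneg hzero htri hhomog hsubmul δ hleibniz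
end

section
/- If b ∈ A satisfies ‖b‖_M < ∞ for all M and b is invertible with ‖b⁻¹‖ < ∞, then ‖b⁻¹‖_{M+1} ≤ ‖b⁻¹‖_M² · ‖b‖_{M+1} for every M; in particular all M-norms of b⁻¹ are finite. -/
section Leibniz

variable {A : Type*} [Ring A] {δ : A → A}

theorem map_one_eq_zero_of_leibniz (hδ : ∀ a b, δ (a * b) = a * δ b + δ a * b) : δ 1 = 0 := by
  simpa using hδ 1 1

theorem map_units_inv_of_leibniz (hδ : ∀ a b, δ (a * b) = a * δ b + δ a * b) (u : Aˣ) :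
    δ ↑u⁻¹ = -(↑u⁻¹ * δ u * ↑u⁻¹) := by
  have hsum : ↑u⁻¹ * δ u + δ ↑u⁻¹ * u = 0 := by
    rw [← hδ, Units.inv_mul, map_one_eq_zero_of_leibniz hδ]
  calc δ ↑u⁻¹ = δ ↑u⁻¹ * u * ↑u⁻¹ := by rw [mul_assoc, Units.mul_inv, mul_one]
    _ = -(↑u⁻¹ * δ u * ↑u⁻¹) := by rw [eq_neg_of_add_eq_zero_right hsum, neg_mul]

end Leibniz

theorem mnorm_nonneg {A : Type*} [SeminormedAddGroup A] (δ : A → A) (M : ℕ) (a : A) :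
    0 ≤ MNorm (‖·‖) δ M a := by
  induction M generalizing a with
  | zero => exact norm_nonneg a
  | succ M ih => exact add_nonneg (ih a) (ih (δ a))

section Additive

variable {A F : Type*} [SeminormedAddGroup A] [FunLike F A A] [AddMonoidHomClass F A A] (δ : F)

theorem mnorm_add_le (M : ℕ) (a b : A) :
    MNorm (‖·‖) δ M (a + b) ≤ MNorm (‖·‖) δ M a + MNorm (‖·‖) δ M b := by
  induction M generalizing a b with
  | zero => exact norm_add_le a b
  | succ M ih =>
    simp only [MNorm, map_add]
    linarith [ih a b, ih (δ a) (δ b)]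

theorem mnorm_neg (M : ℕ) (a : A) : MNorm (‖·‖) δ M (-a) = MNorm (‖·‖) δ M a := by
  induction M generalizing a with
  | zero => exact norm_neg a
  | succ M ih => simp only [MNorm, map_neg, ih]

end Additive

section Multiplicative

variable {A F : Type*} [SeminormedRing A] [FunLike F A A] [AddMonoidHomClass F A A] {δ : F}

theorem mnorm_mul_le (hδ : ∀ a b, δ (a * b) = a * δ b + δ a * b) (M : ℕ) (a b : A) :
    MNorm (‖·‖) δ M (a * b) ≤ MNorm (‖·‖) δ M a * MNorm (‖·‖) δ M b := by
  induction M generalizing a b with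
  | zero => exact norm_mul_le a b
  | succ M ih =>
    have hδab : MNorm (‖·‖) δ M (δ (a * b)) ≤
        MNorm (‖·‖) δ M a * MNorm (‖·‖) δ M (δ b) + MNorm (‖·‖) δ M (δ a) * MNorm (‖·‖) δ M b :=
      calc MNorm (‖·‖) δ M (δ (a * b))
          ≤ MNorm (‖·‖) δ M (a * δ b) + MNorm (‖·‖) δ M (δ a * b) :=
            hδ a b ▸ mnorm_add_le δ M _ _
        _ ≤ _ := add_le_add (ih a (δ b)) (ih (δ a) b)
    simp only [MNorm]
    nlinarith [ih a b, mul_nonneg (mnorm_nonneg δ M (δ a)) (mnorm_nonneg δ M (δ b))]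

theorem mnorm_mul_mul_le (hδ : ∀ a b, δ (a * b) = a * δ b + δ a * b) (M : ℕ) (a b c : A) :
    MNorm (‖·‖) δ M (a * b * c) ≤
      MNorm (‖·‖) δ M a * MNorm (‖·‖) δ M b * MNorm (‖·‖) δ M c :=
  (mnorm_mul_le hδ M _ _).trans <|
    mul_le_mul_of_nonneg_right (mnorm_mul_le hδ M _ _) (mnorm_nonneg δ M _)

/-- Both summands of `‖u⁻¹‖_{M+1}` are sandwiches `u⁻¹ x u⁻¹`: `u⁻¹ = u⁻¹ u u⁻¹` and
`δ u⁻¹ = -u⁻¹ (δ u) u⁻¹`. -/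
theorem mnorm_succ_units_inv_le (hδ : ∀ a b, δ (a * b) = a * δ b + δ a * b) (u : Aˣ) (M : ℕ) :
    MNorm (‖·‖) δ (M + 1) ↑u⁻¹ ≤ MNorm (‖·‖) δ M ↑u⁻¹ ^ 2 * MNorm (‖·‖) δ (M + 1) ↑u := by
  have hinv : MNorm (‖·‖) δ M ↑u⁻¹ ≤ MNorm (‖·‖) δ M ↑u⁻¹ ^ 2 * MNorm (‖·‖) δ M u := by
    have := mnorm_mul_mul_le hδ M ↑u⁻¹ u ↑u⁻¹
    rwa [Units.inv_mul, one_mul, mul_right_comm, ← sq] at this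
  have hδinv : MNorm (‖·‖) δ M (δ ↑u⁻¹) ≤ MNorm (‖·‖) δ M ↑u⁻¹ ^ 2 * MNorm (‖·‖) δ M (δ u) := by
    have := mnorm_mul_mul_le hδ M ↑u⁻¹ (δ u) ↑u⁻¹
    rwa [mul_right_comm, ← sq, ← mnorm_neg, ← map_units_inv_of_leibniz hδ] at this
  simp only [MNorm]
  linarith

end Multiplicative

theorem mnorm_inverse_bound_general {A : Type*} [NormedRing A] [NormedAlgebra ℂ A]
    (δ : A →ₗ[ℂ] A)
    (hleibniz : ∀ a b, δ (a * b) = a * δ b + δ a * b)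
    (b : Aˣ) :
    ∀ M : ℕ,
      MNorm (fun a => ‖a‖) (⇑δ) (M + 1) (↑b⁻¹ : A) ≤
        (MNorm (fun a => ‖a‖) (⇑δ) M (↑b⁻¹ : A)) ^ 2 *
          MNorm (fun a => ‖a‖) (⇑δ) (M + 1) (↑b : A) :=
  mnorm_succ_units_inv_le hleibniz b

/-- In a unital Banach algebra `A` over `ℂ` with a derivation `δ`, if `b` is invertible
then `‖b⁻¹‖_{M+1} ≤ ‖b⁻¹‖_M ^ 2 · ‖b‖_{M+1}` for every `M` (all M-norms of `b⁻¹` being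
finite real numbers). -/
theorem mnorm_inverse_bound {A : Type*} [NormedRing A] [NormedAlgebra ℂ A]
    [CompleteSpace A]
    (δ : A →ₗ[ℂ] A)
    (hleibniz : ∀ a b, δ (a * b) = a * δ b + δ a * b)
    (b : Aˣ) :
    ∀ M : ℕ,
      MNorm (fun a => ‖a‖) (⇑δ) (M + 1) (↑b⁻¹ : A) ≤
        (MNorm (fun a => ‖a‖) (⇑δ) M (↑b⁻¹ : A)) ^ 2 *
          MNorm (fun a => ‖a‖) (⇑δ) (M + 1) (↑b : A) :=
  mnorm_inverse_bound_general δ hleibniz b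
end

section
/- Let F : ℤ/Sℤ → ℂ be a locally constant function with mean zero: ∫ F dμ = 0 with respect to Haar measure. Then there exists a locally constant function G : ℤ/Sℤ → ℂ solving the cohomological equation F(x) = G(x + q(1)) − G(x) for all x. -/
open scoped BigOperators

/-- `l` is a (positive, finite) divisor of the supernatural number with exponent
function `ε : ℕ → ℕ∞` (only values at primes are relevant). -/
def SDvd (ε : ℕ → ℕ∞) (l : ℕ) : Prop :=
  0 < l ∧ ∀ p : ℕ, (l.factorization p : ℕ∞) ≤ ε p

/-- The supernatural number `ε` is infinite: it has infinitely many finite divisors. -/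
def SInfinite (ε : ℕ → ℕ∞) : Prop := {l : ℕ | SDvd ε l}.Infinite

/-- The finite divisors of `ε`. -/
abbrev SDivisors (ε : ℕ → ℕ∞) := {l : ℕ // SDvd ε l}

instance (n : ℕ) : TopologicalSpace (ZMod n) := ⊥
instance (n : ℕ) : DiscreteTopology (ZMod n) := ⟨rfl⟩

/-- The profinite ring `ℤ/Sℤ = lim← ℤ/lℤ`, realized as the subring of compatible
sequences in `Π l | S, ℤ/lℤ`. -/
def ZModSRing (ε : ℕ → ℕ∞) : Subring (Π l : SDivisors ε, ZMod l.1) where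
  carrier := {x | ∀ (k l : SDivisors ε) (h : k.1 ∣ l.1),
    ZMod.castHom h (ZMod k.1) (x l) = x k}
  zero_mem' := fun k l h => by simp
  one_mem' := fun k l h => map_one (ZMod.castHom h (ZMod k.1))
  add_mem' := fun {a b} ha hb k l h => by
    simp only [Pi.add_apply, map_add, ha k l h, hb k l h]
  neg_mem' := fun {a} ha k l h => by
    simp only [Pi.neg_apply, map_neg, ha k l h]
  mul_mem' := fun {a b} ha hb k l h => by
    simp only [Pi.mul_apply, map_mul, ha k l h, hb k l h]

/-- The canonical map `q : ℤ → ℤ/Sℤ`. -/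
def qS (ε : ℕ → ℕ∞) (x : ℤ) : ZModSRing ε :=
  ⟨fun l => (x : ZMod l.1), fun k l h => by
    simp only [ZMod.castHom_apply]; exact map_intCast (ZMod.castHom h (ZMod k.1)) x⟩

/-! A locally constant `l`-periodic `F` factors through the projection `ℤ/Sℤ → ℤ/lℤ`:
both `F` and `x ↦ F (proj x)` are continuous and agree on the dense image of `ℤ`.
On `ℤ/lℤ` a function `f` with zero sum is the coboundary of its partial sums
`g a = ∑_{k < a} f k` (the wrap-around step `g 0 - g (l - 1) = f (l - 1)` is exactly
the zero-sum condition), so `G = g ∘ proj` works. -/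

open Finset Function

theorem exists_eq_sub_add_one_of_sum_range_eq_zero {M : Type*} [AddCommGroup M] {n : ℕ}
    [NeZero n] (f : ZMod n → M) (hf : ∑ k ∈ range n, f k = 0) :
    ∃ g : ZMod n → M, ∀ a, f a = g (a + 1) - g a := by
  refine ⟨fun a => ∑ k ∈ range a.val, f k, fun a => ?_⟩
  have hsum := sum_range_succ (fun k : ℕ => f k) a.val
  have hsucc : a + 1 = ((a.val + 1 : ℕ) : ZMod n) := by
    rw [Nat.cast_succ, ZMod.natCast_zmod_val]
  rw [ZMod.natCast_zmod_val] at hsum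
  rcases (Order.add_one_le_iff.mpr a.val_lt).eq_or_lt with hlast | hlt
  · rw [hlast, hf] at hsum
    simp only [hsucc, hlast, ZMod.natCast_self, ZMod.val_zero, range_zero, sum_empty, zero_sub]
    exact eq_neg_of_add_eq_zero_right hsum.symm
  · simp only [hsucc, ZMod.val_cast_of_lt hlt, hsum, add_sub_cancel_left]

theorem qS_eq_intCast (ε : ℕ → ℕ∞) (x : ℤ) : qS ε x = x := rfl

theorem SDvd.lcm {ε : ℕ → ℕ∞} {a b : ℕ} (ha : SDvd ε a) (hb : SDvd ε b) :
    SDvd ε (a.lcm b) := by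
  refine ⟨Nat.pos_of_ne_zero (Nat.lcm_ne_zero ha.1.ne' hb.1.ne'), fun p => ?_⟩
  rw [Nat.factorization_lcm ha.1.ne' hb.1.ne', Finsupp.sup_apply, Nat.mono_cast.map_max]
  exact max_le (ha.2 p) (hb.2 p)

theorem exists_sDvd_forall_dvd {ε : ℕ → ℕ∞} (I : Finset (SDivisors ε)) :
    ∃ N : SDivisors ε, ∀ i ∈ I, i.1 ∣ N.1 := by
  classical
  induction I using Finset.induction_on with
  | empty => exact ⟨⟨1, Nat.one_pos, fun p => by simp⟩, by simp⟩
  | insert i I _ ih =>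
    obtain ⟨N, hN⟩ := ih
    refine ⟨⟨i.1.lcm N.1, i.2.lcm N.2⟩, fun j hj => ?_⟩
    rcases mem_insert.mp hj with rfl | hj
    · exact Nat.dvd_lcm_left _ _
    · exact (hN j hj).trans (Nat.dvd_lcm_right _ _)

namespace ZModSRing

variable {ε : ℕ → ℕ∞}

def proj (L : SDivisors ε) : ZModSRing ε →+* ZMod L.1 :=
  (Pi.evalRingHom (fun l : SDivisors ε => ZMod l.1) L).comp (ZModSRing ε).subtype

theorem continuous_proj (L : SDivisors ε) : Continuous (proj L) :=
  (continuous_apply L).comp continuous_subtype_val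

theorem proj_natCast_val_proj {k L : SDivisors ε} [NeZero L.1] (h : k.1 ∣ L.1)
    (x : ZModSRing ε) : proj k ((proj L x).val : ZModSRing ε) = proj k x := by
  calc proj k ((proj L x).val : ZModSRing ε) = ((proj L x).val : ZMod k.1) := map_natCast _ _
    _ = ZMod.castHom h (ZMod k.1) (proj L x) := by
      rw [← map_natCast (ZMod.castHom h (ZMod k.1)), ZMod.natCast_zmod_val]
    _ = proj k x := x.2 k L h

theorem denseRange_intCast : DenseRange (Int.cast : ℤ → ZModSRing ε) := by
  rintro x
  rw [mem_closure_iff]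
  intro U hU hxU
  obtain ⟨V, hV, rfl⟩ := isOpen_induced_iff.mp hU
  obtain ⟨I, u, hIu, hsub⟩ := isOpen_pi_iff.mp hV x.1 hxU
  obtain ⟨N, hN⟩ := exists_sDvd_forall_dvd I
  have : NeZero N.1 := ⟨N.2.1.ne'⟩
  refine ⟨_, hsub fun i hi => ?_, (proj N x).val, Int.cast_natCast _⟩
  have hcoord : ((proj N x).val : ZModSRing ε).1 i = x.1 i := proj_natCast_val_proj (hN i hi) x
  rw [hcoord]
  exact (hIu i hi).2

theorem apply_eq_apply_natCast_val_proj {X : Type*} [TopologicalSpace X] [T2Space X]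
    {F : ZModSRing ε → X} (hF : Continuous F) (L : SDivisors ε)
    (hper : Periodic F (L.1 : ZModSRing ε)) (x : ZModSRing ε) :
    F x = F ((proj L x).val : ZModSRing ε) := by
  have : NeZero L.1 := ⟨L.2.1.ne'⟩
  have hcont : Continuous fun x => ((proj L x).val : ZModSRing ε) :=
    (continuous_of_discreteTopology (f := fun a : ZMod L.1 => (a.val : ZModSRing ε))).comp
      (continuous_proj L)
  suffices F = fun x => F ((proj L x).val : ZModSRing ε) from congrFun this x
  refine denseRange_intCast.equalizer hF (hF.comp hcont) (funext fun n => ?_)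
  simp only [comp_apply, map_intCast]
  rw [← Int.cast_natCast, ZMod.val_intCast, Int.emod_def, mul_comm, Int.cast_sub, Int.cast_mul,
    Int.cast_natCast, hper.sub_int_mul_eq]

end ZModSRing

open ZModSRing in
theorem coboundary_of_mean_zero_general (ε : ℕ → ℕ∞)
    (F : ZModSRing ε → ℂ) (hF : IsLocallyConstant F)
    (l : ℕ) (hl : SDvd ε l)
    (hper : ∀ x : ZModSRing ε, F (x + qS ε (l : ℤ)) = F x)
    (hmean : ∑ k ∈ Finset.range l, F (qS ε (k : ℤ)) = 0) :
    ∃ G : ZModSRing ε → ℂ, IsLocallyConstant G ∧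
      ∀ x : ZModSRing ε, F x = G (x + qS ε 1) - G x := by
  let L : SDivisors ε := ⟨l, hl⟩
  have : NeZero l := ⟨hl.1.ne'⟩
  have hperL : Periodic F (L.1 : ZModSRing ε) := by
    rw [← Int.cast_natCast]
    exact hper
  obtain ⟨g, hg⟩ := exists_eq_sub_add_one_of_sum_range_eq_zero
    (fun a : ZMod l => F (a.val : ZModSRing ε)) <| by
      rw [← hmean]
      refine sum_congr rfl fun k hk => ?_
      rw [ZMod.val_cast_of_lt (mem_range.mp hk), qS_eq_intCast, Int.cast_natCast]
  refine ⟨g ∘ proj L, (IsLocallyConstant.of_discrete g).comp_continuous (continuous_proj L),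
    fun x => ?_⟩
  rw [apply_eq_apply_natCast_val_proj hF.continuous L hperL x, hg, qS_eq_intCast, Int.cast_one,
    comp_apply, comp_apply, map_add, map_one]

/-- Cohomological equation: if `F : ℤ/Sℤ → ℂ` is locally constant (hence `l`-periodic
for some finite divisor `l` of `S`) with zero Haar mean (the average over one period
vanishes), then `F(x) = G(x + q(1)) − G(x)` for some locally constant `G`. -/
theorem coboundary_of_mean_zero (ε : ℕ → ℕ∞) (hinf : SInfinite ε)
    (F : ZModSRing ε → ℂ) (hF : IsLocallyConstant F)
    (l : ℕ) (hl : SDvd ε l)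
    (hper : ∀ x : ZModSRing ε, F (x + qS ε (l : ℤ)) = F x)
    (hmean : ∑ k ∈ Finset.range l, F (qS ε (k : ℤ)) = 0) :
    ∃ G : ZModSRing ε → ℂ, IsLocallyConstant G ∧
      ∀ x : ZModSRing ε, F x = G (x + qS ε 1) - G x :=
  coboundary_of_mean_zero_general ε F hF l hl hper hmean
end

section
/- Define, for a function φ : {(l,k) : l | S, 0 ≤ k < l} → ℤ in the class Φ (satisfying the compatibility φ(l,k) = ∑_{j=0}^{(l'/l)−1} φ(l', k+jl) whenever l | l' | S), the quantity Rφ(l,l') = ∑_{a=1}^{(l'/l)−1} ∑_{j=0}^{al−1} φ(l',j). Then for finite divisors l | l' of S: Rφ(1,l') − Rφ(1,l) = l · Rφ(l,l'). Consequently Rφ(1,l) ≡ Rφ(1,l') mod l. -/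
open scoped BigOperators

/-- The class `Φ`: integer-valued functions `φ(l,k)` (for `l | S` finite, `0 ≤ k < l`)
satisfying the refinement compatibility `φ(l,k) = ∑_{j<l'/l} φ(l', k + j·l)` for `l | l'`. -/
def InPhi (ε : ℕ → ℕ∞) (φ : ℕ → ℕ → ℤ) : Prop :=
  ∀ l l' : ℕ, SDvd ε l' → l ∣ l' → ∀ k : ℕ, k < l →
    φ l k = ∑ j ∈ Finset.range (l' / l), φ l' (k + j * l)

/-- `Rφ(l,l') = ∑_{a=1}^{(l'/l)−1} ∑_{j=0}^{a·l−1} φ(l',j)` (empty sums are zero). -/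
def Rphi (φ : ℕ → ℕ → ℤ) (l l' : ℕ) : ℤ :=
  ∑ a ∈ Finset.Ico 1 (l' / l), ∑ j ∈ Finset.range (a * l), φ l' j

/-! With `F n = ∑_{j<n} φ(l', j)`, compatibility writes each partial sum of `φ(l, ·)` as a sum
over the `l'/l` blocks of length `l` of increments of `F`; summing over `[0, l)` gives
`Rφ(1,l) = ∑_{n<l'} F n - l ∑_{j<l'/l} F (j l) = Rφ(1,l') - l Rφ(l,l')`. -/

open Finset

lemma Rphi_eq_sum_range (φ : ℕ → ℕ → ℤ) (l l' : ℕ) :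
    Rphi φ l l' = ∑ a ∈ range (l' / l), ∑ j ∈ range (a * l), φ l' j := by
  refine sum_subset (fun a ha => ?_) (fun a ha ha' => ?_)
  · simp only [mem_Ico, mem_range] at ha ⊢
    exact ha.2
  · obtain rfl : a = 0 := by simp_all
    simp

lemma Rphi_one_eq_sum_range (φ : ℕ → ℕ → ℤ) (n : ℕ) :
    Rphi φ 1 n = ∑ a ∈ range n, ∑ j ∈ range a, φ n j := by
  simp only [Rphi_eq_sum_range, Nat.div_one, mul_one]

lemma sum_range_sum_range_coarsen (g : ℕ → ℤ) (l m : ℕ) :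
    ∑ a ∈ range l, ∑ k ∈ range a, ∑ j ∈ range m, g (k + j * l)
        + l * ∑ j ∈ range m, ∑ i ∈ range (j * l), g i
      = ∑ a ∈ range (m * l), ∑ i ∈ range a, g i := by
  induction m with
  | zero => simp
  | succ m ih =>
    have hshift : ∀ a, ∑ i ∈ range (m * l + a), g i
        = ∑ i ∈ range (m * l), g i + ∑ k ∈ range a, g (k + m * l) := by
      intro a
      simp only [sum_range_add, add_comm _ (m * l)]
    simp only [sum_range_succ, sum_add_distrib, Nat.succ_mul, sum_range_add, hshift,
      sum_const, card_range, nsmul_eq_mul, ← ih]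
    ring

theorem Rphi_consistency_general (ε : ℕ → ℕ∞) (φ : ℕ → ℕ → ℤ) (hφ : InPhi ε φ)
    (l l' : ℕ) (hl' : SDvd ε l') (hdvd : l ∣ l') :
    Rphi φ 1 l' - Rphi φ 1 l = (l : ℤ) * Rphi φ l l' ∧
    Rphi φ 1 l ≡ Rphi φ 1 l' [ZMOD (l : ℤ)] := by
  have hblocks := sum_range_sum_range_coarsen (φ l') l (l' / l)
  rw [Nat.div_mul_cancel hdvd] at hblocks
  have key : Rphi φ 1 l + l * Rphi φ l l' = Rphi φ 1 l' := by
    rw [Rphi_one_eq_sum_range, Rphi_one_eq_sum_range, Rphi_eq_sum_range, ← hblocks]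
    congr 1
    refine sum_congr rfl fun a ha => sum_congr rfl fun k hk => hφ l l' hl' hdvd k ?_
    exact (mem_range.1 hk).trans (mem_range.1 ha)
  have hdiff : Rphi φ 1 l' - Rphi φ 1 l = (l : ℤ) * Rphi φ l l' := by
    rw [← key]; ring
  exact ⟨hdiff, Int.modEq_iff_dvd.mpr ⟨_, hdiff⟩⟩

/-- For `φ ∈ Φ` and finite divisors `l | l'` of `S`:
`Rφ(1,l') − Rφ(1,l) = l · Rφ(l,l')`, and consequently `Rφ(1,l) ≡ Rφ(1,l') (mod l)`. -/
theorem Rphi_consistency (ε : ℕ → ℕ∞) (φ : ℕ → ℕ → ℤ) (hφ : InPhi ε φ)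
    (l l' : ℕ) (hl' : SDvd ε l') (hdvd : l ∣ l') (hl : 0 < l) :
    Rphi φ 1 l' - Rphi φ 1 l = (l : ℤ) * Rphi φ l l' ∧
    Rphi φ 1 l ≡ Rphi φ 1 l' [ZMOD (l : ℤ)] :=
  Rphi_consistency_general ε φ hφ l l' hl' hdvd
end

section
/- With Φ and R as above, the map ρ : Φ → ℤ/Sℤ, ρ(φ) = (Rφ(1,l) mod l)_{l|S}, is a well-defined surjective group homomorphism onto the profinite group ℤ/Sℤ = lim← ℤ/lℤ. -/
open scoped BigOperators

/-! Since `Rφ(1,n) = ∑_{j<n} (n-1-j) φ(n,j)`, reducing modulo a divisor `k ∣ n` kills `n` and the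
multiples of `k` in the weights; grouping `j` by its residue mod `k` and using the compatibility
of `φ` then gives `Rφ(1,n) ≡ Rφ(1,k) mod k`. Additivity is linearity of `R` in `φ`.
For surjectivity onto `x`, let `φ(n,·)` be the indicator of the representative in `[0,n)` of
`-1 - xₙ`: the compatibility of `x` makes these indicators compatible, and
`Rφ(1,n) = n - 1 - (-1 - xₙ) ≡ xₙ mod n`. -/

open Finset

theorem sum_range_sum_range_eq_sum_mul {R : Type*} [CommRing R] (f : ℕ → R) (n : ℕ) :
    ∑ a ∈ range n, ∑ j ∈ range a, f j = ∑ j ∈ range n, ((n : R) - 1 - j) * f j := by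
  induction n with
  | zero => simp
  | succ n ih =>
    rw [sum_range_succ, ih, sum_range_succ _ n, ← sum_add_distrib]
    push_cast
    rw [add_sub_cancel_right, sub_self, zero_mul, add_zero]
    exact sum_congr rfl fun j _ => by ring

theorem sum_range_mul_eq_sum_sum {M : Type*} [AddCommMonoid M] (g : ℕ → M) (t k : ℕ) :
    ∑ j ∈ range (t * k), g j = ∑ q ∈ range t, ∑ m ∈ range k, g (q * k + m) := by
  induction t with
  | zero => simp
  | succ t ih => rw [sum_range_succ, ← ih, Nat.succ_mul, sum_range_add]

theorem Nat.add_mul_eq_iff_eq_mod_and_eq_div {k l j v : ℕ} (hk : k < l) :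
    k + j * l = v ↔ k = v % l ∧ j = v / l := by
  have hl : 0 < l := by omega
  constructor
  · intro h
    obtain ⟨hdiv, hmod⟩ := (Nat.div_mod_unique hl).mpr ⟨by rw [mul_comm, h], hk⟩
    exact ⟨hmod.symm, hdiv.symm⟩
  · rintro ⟨rfl, rfl⟩
    exact Nat.mod_add_div' v l

theorem sum_range_ite_add_mul_eq {l t k v : ℕ} (hk : k < l) (hv : v < t * l) :
    ∑ j ∈ range t, (if k + j * l = v then (1 : ℤ) else 0) = if k = v % l then 1 else 0 := by
  simp_rw [Nat.add_mul_eq_iff_eq_mod_and_eq_div hk]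
  split_ifs with h
  · simp only [h, true_and, sum_ite_eq', mem_range]
    exact if_pos (Nat.div_lt_of_lt_mul (by rwa [mul_comm]))
  · simp only [h, false_and, if_false, sum_const_zero]

theorem SDvd.of_dvd {ε : ℕ → ℕ∞} {k n : ℕ} (hn : SDvd ε n) (hkn : k ∣ n) : SDvd ε k := by
  have hk : 0 < k := Nat.pos_of_dvd_of_pos hkn hn.1
  refine ⟨hk, fun p => le_trans ?_ (hn.2 p)⟩
  exact_mod_cast (Nat.factorization_le_iff_dvd hk.ne' hn.1.ne').2 hkn p

theorem ZMod.val_castHom {l l' : ℕ} [NeZero l'] (h : l ∣ l') (a : ZMod l') :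
    (ZMod.castHom h (ZMod l) a).val = a.val % l := by
  conv_lhs => rw [← ZMod.natCast_zmod_val a]
  rw [map_natCast, ZMod.val_natCast]

theorem Rphi_one (φ : ℕ → ℕ → ℤ) (n : ℕ) :
    Rphi φ 1 n = ∑ j ∈ range n, ((n : ℤ) - 1 - j) * φ n j := by
  rw [← sum_range_sum_range_eq_sum_mul, Rphi, Nat.div_one]
  simp only [mul_one]
  rcases Nat.eq_zero_or_pos n with rfl | hn
  · simp
  · rw [range_eq_Ico, sum_eq_sum_Ico_succ_bot hn, range_zero, sum_empty, zero_add]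

theorem Rphi_add (φ ψ : ℕ → ℕ → ℤ) (l l' : ℕ) :
    Rphi (φ + ψ) l l' = Rphi φ l l' + Rphi ψ l l' := by
  simp only [Rphi, Pi.add_apply, sum_add_distrib]

theorem intCast_Rphi_one_of_dvd {ε : ℕ → ℕ∞} {φ : ℕ → ℕ → ℤ} (hφ : InPhi ε φ) {k n : ℕ}
    (hn : SDvd ε n) (hkn : k ∣ n) : ((Rphi φ 1 n : ℤ) : ZMod k) = Rphi φ 1 k := by
  have hn0 : (n : ZMod k) = 0 := (ZMod.natCast_eq_zero_iff n k).2 hkn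
  simp only [Rphi_one, Int.cast_sum, Int.cast_mul, Int.cast_sub, Int.cast_natCast, Int.cast_one,
    hn0, ZMod.natCast_self]
  rw [show range n = range (n / k * k) by rw [Nat.div_mul_cancel hkn], sum_range_mul_eq_sum_sum,
    sum_comm]
  refine sum_congr rfl fun m hm => ?_
  rw [hφ k n hn hkn m (mem_range.mp hm), Int.cast_sum, mul_sum]
  refine sum_congr rfl fun q _ => ?_
  push_cast
  rw [ZMod.natCast_self, add_comm m]
  ring

open Classical in
noncomputable def pointPhi (ε : ℕ → ℕ∞) (y : Π l : SDivisors ε, ZMod l.1) : ℕ → ℕ → ℤ :=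
  fun n j => if h : SDvd ε n then if j = (y ⟨n, h⟩).val then 1 else 0 else 0

theorem pointPhi_mem {ε : ℕ → ℕ∞} {y : Π l : SDivisors ε, ZMod l.1} (hy : y ∈ ZModSRing ε) :
    InPhi ε (pointPhi ε y) := by
  intro l l' hl' hll' k hk
  have hl := hl'.of_dvd hll'
  have : NeZero l' := ⟨hl'.1.ne'⟩
  have hval : (y ⟨l, hl⟩).val = (y ⟨l', hl'⟩).val % l := by
    rw [← hy ⟨l, hl⟩ ⟨l', hl'⟩ hll', ZMod.val_castHom]
  simp only [pointPhi, dif_pos hl, dif_pos hl', hval]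
  refine (sum_range_ite_add_mul_eq (v := (y ⟨l', hl'⟩).val) hk ?_).symm
  rw [Nat.div_mul_cancel hll']
  exact ZMod.val_lt _

theorem intCast_Rphi_one_pointPhi {ε : ℕ → ℕ∞} (y : Π l : SDivisors ε, ZMod l.1)
    (l : SDivisors ε) : ((Rphi (pointPhi ε y) 1 l.1 : ℤ) : ZMod l.1) = -1 - y l := by
  obtain ⟨n, hn⟩ := l
  have : NeZero n := ⟨hn.1.ne'⟩
  simp only [Rphi_one, pointPhi, dif_pos hn, mul_ite, mul_one, mul_zero, sum_ite_eq', mem_range,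
    ZMod.val_lt, if_true]
  push_cast
  rw [ZMod.natCast_self, ZMod.natCast_zmod_val]
  ring

theorem rho_welldefined_additive_surjective_general (ε : ℕ → ℕ∞) :
    (∀ φ : ℕ → ℕ → ℤ, InPhi ε φ →
      (fun l : SDivisors ε => ((Rphi φ 1 l.1 : ℤ) : ZMod l.1)) ∈ ZModSRing ε) ∧
    (∀ φ ψ : ℕ → ℕ → ℤ, InPhi ε φ → InPhi ε ψ →
      (fun l : SDivisors ε => ((Rphi (φ + ψ) 1 l.1 : ℤ) : ZMod l.1)) =
        (fun l : SDivisors ε => ((Rphi φ 1 l.1 : ℤ) : ZMod l.1)) +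
          (fun l : SDivisors ε => ((Rphi ψ 1 l.1 : ℤ) : ZMod l.1))) ∧
    (∀ x : ZModSRing ε, ∃ φ : ℕ → ℕ → ℤ, InPhi ε φ ∧
      ∀ l : SDivisors ε, ((Rphi φ 1 l.1 : ℤ) : ZMod l.1) = x.1 l) := by
  refine ⟨fun φ hφ k l hkl => ?_, fun φ ψ _ _ => ?_, fun x => ?_⟩
  · rw [ZMod.castHom_apply, ZMod.cast_intCast hkl]
    exact intCast_Rphi_one_of_dvd hφ l.2 hkl
  · funext l
    simp only [Rphi_add, Int.cast_add, Pi.add_apply]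
  · refine ⟨pointPhi ε (-1 - x).1, pointPhi_mem (-1 - x).2, fun l => ?_⟩
    rw [intCast_Rphi_one_pointPhi]
    simp

/-- The map `ρ : Φ → ℤ/Sℤ`, `ρ(φ) = (Rφ(1,l) mod l)_{l|S}`, is well defined (it lands
in the inverse limit), additive, and surjective onto the profinite group `ℤ/Sℤ`. -/
theorem rho_welldefined_additive_surjective (ε : ℕ → ℕ∞) (hinf : SInfinite ε) :
    (∀ φ : ℕ → ℕ → ℤ, InPhi ε φ →
      (fun l : SDivisors ε => ((Rphi φ 1 l.1 : ℤ) : ZMod l.1)) ∈ ZModSRing ε) ∧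
    (∀ φ ψ : ℕ → ℕ → ℤ, InPhi ε φ → InPhi ε ψ →
      (fun l : SDivisors ε => ((Rphi (φ + ψ) 1 l.1 : ℤ) : ZMod l.1)) =
        (fun l : SDivisors ε => ((Rphi φ 1 l.1 : ℤ) : ZMod l.1)) +
          (fun l : SDivisors ε => ((Rphi ψ 1 l.1 : ℤ) : ZMod l.1))) ∧
    (∀ x : ZModSRing ε, ∃ φ : ℕ → ℕ → ℤ, InPhi ε φ ∧
      ∀ l : SDivisors ε, ((Rphi φ 1 l.1 : ℤ) : ZMod l.1) = x.1 l) :=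
  rho_welldefined_additive_surjective_general ε
end

section
/- Let δ be the automorphism-twisted difference on Φ given by ((1−β*)ψ)(l,k) = ψ(l,k) − ψ(l, (k+1) mod l). Then for φ = (1−β*)ψ one has Rφ(1,l) = l·ψ(l,0) − ψ(1,0) for every finite divisor l of S; in particular Rφ(1,l) ≡ −ψ(1,0) mod l for all l, so ρ(φ) lies in the canonical copy of ℤ inside ℤ/Sℤ. -/
open scoped BigOperators

/-- The twisted difference `(1 − β*)ψ` of `ψ ∈ Φ`: `φ(l,k) = ψ(l,k) − ψ(l,(k+1) mod l)`. -/
def deltaPhi (ψ : ℕ → ℕ → ℤ) : ℕ → ℕ → ℤ := fun l k => ψ l k - ψ l ((k + 1) % l)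

/-! For `a < l` the inner sum `∑_{j<a} φ(l,j)` telescopes to `ψ(l,0) − ψ(l,a)`, because `j + 1`
never wraps around mod `l`. Summing over `1 ≤ a < l` leaves `l·ψ(l,0) − ∑_{j<l} ψ(l,j)`, and
compatibility of `ψ` identifies the last sum with `ψ(1,0)`. -/

open Finset

lemma sum_range_deltaPhi (ψ : ℕ → ℕ → ℤ) {l a : ℕ} (ha : a < l) :
    ∑ j ∈ range a, deltaPhi ψ l j = ψ l 0 - ψ l a := by
  have hstep : ∀ j ∈ range a, deltaPhi ψ l j = ψ l j - ψ l (j + 1) := fun j hj => by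
    rw [deltaPhi, Nat.mod_eq_of_lt (by grind)]
  rw [sum_congr rfl hstep, sum_range_sub' (ψ l)]

lemma Rphi_one_deltaPhi (ψ : ℕ → ℕ → ℤ) (l : ℕ) :
    Rphi (deltaPhi ψ) 1 l = l * ψ l 0 - ∑ j ∈ range l, ψ l j := by
  rcases l with _ | n
  · simp [Rphi]
  have htelescope : ∀ a ∈ range n, ∑ j ∈ range (a + 1), deltaPhi ψ (n + 1) j =
      ψ (n + 1) 0 - ψ (n + 1) (a + 1) := fun a ha =>
    sum_range_deltaPhi ψ (by grind)
  simp only [Rphi, Nat.div_one, mul_one, sum_Ico_eq_sum_range, add_tsub_cancel_right, add_comm 1,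
    sum_congr rfl htelescope, sum_sub_distrib, sum_const, card_range, nsmul_eq_mul,
    sum_range_succ' (ψ (n + 1))]
  push_cast
  ring

lemma InPhi.apply_one_zero {ε : ℕ → ℕ∞} {φ : ℕ → ℕ → ℤ} (hφ : InPhi ε φ) {l : ℕ}
    (hl : SDvd ε l) : φ 1 0 = ∑ j ∈ range l, φ l j := by
  simpa using hφ 1 l hl (one_dvd l) 0 one_pos

/-- For `φ = (1 − β*)ψ`: `Rφ(1,l) = l·ψ(l,0) − ψ(1,0)` for every finite divisor `l` of
`S`; in particular `Rφ(1,l) ≡ −ψ(1,0) (mod l)` for all `l`, so `ρ(φ)` lies in the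
canonical copy of `ℤ` inside `ℤ/Sℤ` (it equals `q(−ψ(1,0))`). -/
theorem Rphi_of_coboundary (ε : ℕ → ℕ∞) (ψ : ℕ → ℕ → ℤ) (hψ : InPhi ε ψ) :
    (∀ l : ℕ, SDvd ε l → Rphi (deltaPhi ψ) 1 l = (l : ℤ) * ψ l 0 - ψ 1 0) ∧
    (∀ l : ℕ, SDvd ε l → Rphi (deltaPhi ψ) 1 l ≡ -ψ 1 0 [ZMOD (l : ℤ)]) ∧
    (fun l : SDivisors ε => ((Rphi (deltaPhi ψ) 1 l.1 : ℤ) : ZMod l.1)) =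
      (qS ε (-(ψ 1 0))).1 := by
  have hformula : ∀ l : ℕ, SDvd ε l → Rphi (deltaPhi ψ) 1 l = (l : ℤ) * ψ l 0 - ψ 1 0 :=
    fun l hl => by rw [Rphi_one_deltaPhi, hψ.apply_one_zero hl]
  have hmodEq : ∀ l : ℕ, SDvd ε l → Rphi (deltaPhi ψ) 1 l ≡ -ψ 1 0 [ZMOD (l : ℤ)] :=
    fun l hl => Int.modEq_iff_dvd.mpr ⟨-ψ l 0, by rw [hformula l hl]; ring⟩
  refine ⟨hformula, hmodEq, funext fun l => ?_⟩
  exact (ZMod.intCast_eq_intCast_iff _ _ _).mpr (hmodEq l.1 l.2)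
end
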